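/- Let C ⊆ ℝⁿ be a nonempty convex set. Then for any fixed x ∈ ℝⁿ, the map τ ↦ dist²(x, τC) is convex on [0, ∞). -/

import Mathlib

/-!
For `λ + μ = 1` with `λ, μ ≥ 0`, convexity of `C` gives `(λa + μb) • C = λ • (a • C) + μ • (b • C)`,
while `x = λ • x + μ • x`. The distance from a sum of points to a sum of sets is at most the sum
of the distances, and scaling by `c` scales distances by `|c|`, so `τ ↦ dist(x, τC)` is convex;
it is nonnegative, so its square is convex as well.
-/

open Pointwise

namespace Metric

variable {E : Type*}

theorem infDist_add_add_le [SeminormedAddCommGroup E] (a b : E) (s t : Set E) :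
    infDist (a + b) (s + t) ≤ infDist a s + infDist b t := by
  rcases s.eq_empty_or_nonempty with rfl | hs
  · simp [infDist_nonneg]
  rcases t.eq_empty_or_nonempty with rfl | ht
  · simp [infDist_nonneg]
  have := hs.to_subtype
  have := ht.to_subtype
  rw [infDist_eq_iInf (x := a), infDist_eq_iInf (x := b)]
  refine le_ciInf_add_ciInf fun y z => ?_
  calc infDist (a + b) (s + t) ≤ dist (a + b) (y + z) :=
        infDist_le_dist_of_mem (Set.add_mem_add y.2 z.2)
    _ ≤ dist a y + dist b z := dist_add_add_le _ _ _ _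

theorem infDist_smul {𝕜 : Type*} [NormedDivisionRing 𝕜] [SeminormedAddCommGroup E]
    [Module 𝕜 E] [NormSMulClass 𝕜 E] (c : 𝕜) (s : Set E) (x : E) :
    infDist (c • x) (c • s) = ‖c‖ * infDist x s := by
  rcases eq_or_ne c 0 with rfl | hc
  · rcases s.eq_empty_or_nonempty with rfl | hs
    · simp
    · rw [zero_smul, norm_zero, zero_mul, Set.zero_smul_set hs, ← Set.singleton_zero,
        infDist_singleton, dist_self]
  · exact infDist_smul₀ hc s x

end Metric

open Metric in
theorem Convex.convexOn_infDist_smul {E : Type*} [SeminormedAddCommGroup E] [NormedSpace ℝ E]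
    {C : Set E} (hC : Convex ℝ C) (x : E) :
    ConvexOn ℝ (Set.Ici 0) fun τ : ℝ => infDist x (τ • C) := by
  refine ⟨convex_Ici 0, fun a ha b hb l m hl hm hlm => ?_⟩
  calc infDist x ((l • a + m • b) • C)
      = infDist (l • x + m • x) (l • (a • C) + m • (b • C)) := by
        rw [Convex.combo_self hlm, smul_eq_mul, smul_eq_mul,
          hC.add_smul (mul_nonneg hl ha) (mul_nonneg hm hb), mul_smul, mul_smul]
    _ ≤ infDist (l • x) (l • (a • C)) + infDist (m • x) (m • (b • C)) :=
        infDist_add_add_le _ _ _ _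
    _ = l • infDist x (a • C) + m • infDist x (b • C) := by
        rw [infDist_smul, infDist_smul, Real.norm_of_nonneg hl, Real.norm_of_nonneg hm,
          smul_eq_mul, smul_eq_mul]

theorem stmt16_general (n : ℕ) (C : Set (EuclideanSpace ℝ (Fin n)))
    (hconv : Convex ℝ C) (x : EuclideanSpace ℝ (Fin n)) :
    ConvexOn ℝ (Set.Ici (0:ℝ)) (fun τ : ℝ => (Metric.infDist x (τ • C)) ^ 2) :=
  (hconv.convexOn_infDist_smul x).pow (fun _ _ => Metric.infDist_nonneg) 2

/-- For a nonempty convex `C ⊆ ℝⁿ` and fixed `x`, the map `τ ↦ dist²(x, τC)` is convex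
on `[0,∞)`. -/
theorem stmt16 (n : ℕ) (C : Set (EuclideanSpace ℝ (Fin n))) (hne : C.Nonempty)
    (hconv : Convex ℝ C) (x : EuclideanSpace ℝ (Fin n)) :
    ConvexOn ℝ (Set.Ici (0:ℝ)) (fun τ : ℝ => (Metric.infDist x (τ • C)) ^ 2) :=
  stmt16_general n C hconv x
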